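/- Let x(t) be a nontrivial solution of the linear cyclic negative feedback system. Then there exist t₀ > 0 and integers N₊, N₋ such that x(t) ∈ 𝒩 with N(x(t)) = N₊ for all t ≥ t₀, and x(t) ∈ 𝒩 with N(x(t)) = N₋ for all t ≤ −t₀. -/

import Mathlib

open Filter Topology

/-- δ₁ = −1 (index `0` in our 0-based indexing), δᵢ = 1 for the other indices. -/
def cyclicDelta (n : ℕ) [NeZero n] (i : Fin n) : ℝ := if i = 0 then -1 else 1

/-- The set Λ of vectors with all coordinates nonzero. -/
def cyclicLambda (n : ℕ) [NeZero n] : Set (Fin n → ℝ) := {x | ∀ i, x i ≠ 0}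

/-- The integer valued Lyapunov function `N(x) = card {i : δᵢ xᵢ x_{i−1} < 0}`
(cyclic indices, `x₀ = xₙ`). -/
noncomputable def cyclicN (n : ℕ) [NeZero n] (x : Fin n → ℝ) : ℕ :=
  Nat.card {i : Fin n // cyclicDelta n i * x i * x (i - 1) < 0}

/-- `N_m(x)`: the minimum of `N` over `U ∩ Λ` for all sufficiently small
neighborhoods `U` of `x`, i.e. the least value of `N` attained in every
neighborhood of `x` within `Λ`. -/
noncomputable def cyclicNm (n : ℕ) [NeZero n] (x : Fin n → ℝ) : ℕ :=
  sInf {k | ∃ᶠ y in 𝓝[cyclicLambda n] x, cyclicN n y = k}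

/-- `N_M(x)`: the maximum of `N` over `U ∩ Λ` for all sufficiently small
neighborhoods `U` of `x`. -/
noncomputable def cyclicNM (n : ℕ) [NeZero n] (x : Fin n → ℝ) : ℕ :=
  sSup {k | ∃ᶠ y in 𝓝[cyclicLambda n] x, cyclicN n y = k}

/-- The set 𝒩 on which `N` extends continuously. -/
def cyclicGood (n : ℕ) [NeZero n] : Set (Fin n → ℝ) :=
  {x | cyclicNm n x = cyclicNM n x}

/-- ñ = n if n is odd, n − 1 if n is even. -/
def ntilde (n : ℕ) : ℕ := if n % 2 = 1 then n else n - 1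

/-- A linear cyclic negative feedback system: coefficients `diag t i = a_{ii}(t)`
and `sub t i = a_{i,i−1}(t)` (cyclically, `sub t 0 = a_{1,n}(t)`), all continuous,
with `a_{1,n}(t) < 0` and `a_{i,i−1}(t) > 0` for `i ≠ 1`. -/
structure LinCNF (n : ℕ) [NeZero n] where
  diag : ℝ → Fin n → ℝ
  sub : ℝ → Fin n → ℝ
  cont_diag : ∀ i, Continuous fun t => diag t i
  cont_sub : ∀ i, Continuous fun t => sub t i
  sub_neg : ∀ t, sub t 0 < 0
  sub_pos : ∀ t (i : Fin n), i ≠ 0 → 0 < sub t i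

/-- `x` is a solution of the linear system `ẋᵢ = a_{ii}(t)xᵢ + a_{i,i−1}(t)x_{i−1}`. -/
def LinCNF.IsSolution {n : ℕ} [NeZero n] (S : LinCNF n) (x : ℝ → Fin n → ℝ) : Prop :=
  ∀ (t : ℝ) (i : Fin n),
    HasDerivAt (fun s => x s i) (S.diag t i * x t i + S.sub t i * x t (i - 1)) t

/-- `Φ` is the fundamental (matrix) solution, `Φ(0) = I`. -/
def LinCNF.IsFundamental {n : ℕ} [NeZero n] (S : LinCNF n)
    (Φ : ℝ → (Fin n → ℝ) →ₗ[ℝ] (Fin n → ℝ)) : Prop :=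
  Φ 0 = LinearMap.id ∧ ∀ x₀ : Fin n → ℝ, S.IsSolution fun t => Φ t x₀

/-- The cone `K_h = {0} ∪ {x : N_M(x) ≤ 2h − 1}`. -/
def Kcone (n : ℕ) [NeZero n] (h : ℕ) : Set (Fin n → ℝ) :=
  {0} ∪ {x | cyclicNM n x ≤ 2 * h - 1}

/-- The complementary cone `K^h = {0} ∪ {x : N_m(x) > 2h − 1}`. -/
def KconeUp (n : ℕ) [NeZero n] (h : ℕ) : Set (Fin n → ℝ) :=
  {0} ∪ {x | 2 * h - 1 < cyclicNm n x}


/-!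
Let `ν(t) = N_m(x(t))`. If `xᵢ(t₀) = 0`, variation of constants in `ẋᵢ = aᵢᵢxᵢ + aᵢ,ᵢ₋₁xᵢ₋₁`
shows that just after `t₀` the coordinate `xᵢ` has the sign of `δᵢxᵢ₋₁`, and just before `t₀` the
opposite one. By induction along the cycle, starting from a nonzero coordinate (`x(t₀) ≠ 0` by
uniqueness), `x(t) ∈ Λ` for `t ≠ t₀` close to `t₀`, with no sign change at the indices where
`x(t₀)` vanishes when `t > t₀`, and a sign change at all of them when `t < t₀`.

Among the vectors of `Λ` near `z ≠ 0`, these two sign patterns minimise and maximise `N`: making a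
vector agree with such a pattern at the first index of a run where they disagree does not increase
(resp. decrease) `N`, since only the sign changes at that index and the next one are affected.
Hence `ν(t + s) = N_m(x(t)) = ν(t)` and `ν(t - s) = N_M(x(t)) ≥ ν(t)` for small `s > 0`, so `ν` is
lower semicontinuous and, by real induction, nonincreasing. Being bounded and integer valued, `ν` is
constant near `±∞`, and where it is constant on an open set, `N_M(x(t)) = ν(t⁻) = N_m(x(t))`.
-/

open Set Fin.NatCast Fin.CommRing

theorem Fin.forall_of_imp_sub_one {n : ℕ} [NeZero n] {P : Fin n → Prop} {j : Fin n} (hj : P j)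
    (h : ∀ i, P (i - 1) → P i) (i : Fin n) : P i := by
  have hk : ∀ k : ℕ, P (j + k) := by
    intro k
    induction k with
    | zero => simpa using hj
    | succ k ih => exact h _ (by convert ih using 2; push_cast; ring)
  simpa using hk (i - j : Fin n).val

section SignChanges

variable {n : ℕ} [NeZero n]

theorem cyclicDelta_mul_self (i : Fin n) : cyclicDelta n i * cyclicDelta n i = 1 := by
  unfold cyclicDelta; split_ifs <;> norm_num

def IsSignChange (y : Fin n → ℝ) (i : Fin n) : Prop :=
  cyclicDelta n i * y i * y (i - 1) < 0

theorem cyclicN_eq_ncard (y : Fin n → ℝ) : cyclicN n y = {i | IsSignChange y i}.ncard :=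
  Nat.card_coe_set_eq _

theorem cyclicN_le (y : Fin n → ℝ) : cyclicN n y ≤ n :=
  (Finite.card_subtype_le _).trans (Nat.card_fin n).le

theorem cyclicDelta_mul_mul_mul_eq (u v : Fin n → ℝ) (i : Fin n) :
    (cyclicDelta n i * u i * u (i - 1)) * (cyclicDelta n i * v i * v (i - 1)) =
      u i * v i * (u (i - 1) * v (i - 1)) := by
  linear_combination (u i * v i * (u (i - 1) * v (i - 1))) * cyclicDelta_mul_self i

theorem isSignChange_iff_of_mul_pos {u v : Fin n → ℝ} {i : Fin n}
    (h : 0 < u i * v i * (u (i - 1) * v (i - 1))) : IsSignChange u i ↔ IsSignChange v i := by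
  have key : 0 < (cyclicDelta n i * u i * u (i - 1)) * (cyclicDelta n i * v i * v (i - 1)) := by
    rwa [cyclicDelta_mul_mul_mul_eq]
  unfold IsSignChange
  constructor <;> intro h' <;> nlinarith

theorem isSignChange_iff_not_of_mul_neg {u v : Fin n → ℝ} {i : Fin n}
    (h : u i * v i * (u (i - 1) * v (i - 1)) < 0) : IsSignChange u i ↔ ¬ IsSignChange v i := by
  have key : (cyclicDelta n i * u i * u (i - 1)) * (cyclicDelta n i * v i * v (i - 1)) < 0 := by
    rwa [cyclicDelta_mul_mul_mul_eq]
  unfold IsSignChange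
  constructor
  · intro h' h''; nlinarith
  · intro h'; by_contra h''; push Not at h' h''; nlinarith

theorem not_isSignChange_of_pos {y : Fin n → ℝ} {i : Fin n} {c : ℝ}
    (h₁ : 0 < c * y (i - 1)) (h₂ : 0 < c * cyclicDelta n i * y i) : ¬ IsSignChange y i := by
  have : 0 < c * c * (cyclicDelta n i * y i * y (i - 1)) := by linarith [mul_pos h₂ h₁]
  exact (pos_of_mul_pos_right this (mul_self_nonneg c)).not_gt

theorem isSignChange_of_neg {y : Fin n → ℝ} {i : Fin n} {c : ℝ}
    (h₁ : 0 < c * y (i - 1)) (h₂ : c * cyclicDelta n i * y i < 0) : IsSignChange y i := by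
  have : c * c * (cyclicDelta n i * y i * y (i - 1)) < 0 := by
    linarith [mul_neg_of_neg_of_pos h₂ h₁]
  exact neg_of_mul_neg_right this (mul_self_nonneg c)

theorem cyclicN_eq_of_mul_pos {u v : Fin n → ℝ} (h : ∀ i, 0 < u i * v i) :
    cyclicN n u = cyclicN n v := by
  simp only [cyclicN_eq_ncard]
  congr 1
  ext i
  exact isSignChange_iff_of_mul_pos (mul_pos (h i) (h (i - 1)))

theorem cyclicN_eq_of_forall_not_mul_neg {y y' : Fin n → ℝ} (hy : y ∈ cyclicLambda n)
    (hy' : y' ∈ cyclicLambda n) (h : ∀ i, ¬ y i * y' i < 0) : cyclicN n y = cyclicN n y' :=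
  cyclicN_eq_of_mul_pos fun i => (not_lt.1 (h i)).lt_of_ne (mul_ne_zero (hy i) (hy' i)).symm

/-- `w` and `v` differ only at `i`, so their sign changes can differ only at `i` and `i + 1`. -/
theorem cyclicN_le_of_forall_ne {v w : Fin n → ℝ} {i : Fin n} (hwv : ∀ j ≠ i, w j = v j)
    (hw : ¬ IsSignChange w i) (hv : IsSignChange v i) : cyclicN n w ≤ cyclicN n v := by
  simp only [cyclicN_eq_ncard]
  have hsub : {j | IsSignChange w j} ⊆ insert (i + 1) ({j | IsSignChange v j} \ {i}) := by
    intro j hj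
    by_cases hj1 : j = i + 1
    · exact Or.inl hj1
    have hji : j ≠ i := by rintro rfl; exact hw hj
    have hji' : j - 1 ≠ i := fun h => hj1 (by rw [← h]; ring)
    refine Or.inr ⟨?_, hji⟩
    simpa only [mem_ofPred_eq, IsSignChange, hwv j hji, hwv _ hji'] using hj
  calc _ ≤ (insert (i + 1) ({j | IsSignChange v j} \ {i})).ncard := ncard_le_ncard hsub
    _ ≤ ({j | IsSignChange v j} \ {i}).ncard + 1 := ncard_insert_le _ _
    _ = _ := ncard_sdiff_singleton_add_one hv

/-- The index `i` starts a run of indices where `y` and `y'` have opposite signs; `ŷ` is `y` with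
the sign of `y'` at `i`. -/
theorem exists_update_of_mul_neg {y y' : Fin n → ℝ} (hy : y ∈ cyclicLambda n)
    (hy' : y' ∈ cyclicLambda n) (hsame : ∃ j, 0 < y j * y' j) (hopp : ∃ i, y i * y' i < 0) :
    ∃ i, y i * y' i < 0 ∧ ∃ ŷ ∈ cyclicLambda n, (∀ j ≠ i, ŷ j = y j) ∧ 0 < ŷ i * y' i ∧
      {j | ŷ j * y' j < 0} ⊂ {j | y j * y' j < 0} ∧
      (IsSignChange ŷ i ↔ IsSignChange y' i) ∧ (IsSignChange y i ↔ ¬ IsSignChange ŷ i) := by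
  obtain ⟨i, hi, hi₁⟩ : ∃ i, y i * y' i < 0 ∧ ¬ y (i - 1) * y' (i - 1) < 0 := by
    by_contra! h
    obtain ⟨j, hj⟩ := hsame
    obtain ⟨i, hi⟩ := hopp
    exact Fin.forall_of_imp_sub_one (P := fun i => ¬ y i * y' i < 0) hj.not_gt
      (fun i h' hi => h' (h i hi)) i hi
  have hi₁ : 0 < y (i - 1) * y' (i - 1) :=
    (not_lt.1 hi₁).lt_of_ne (mul_ne_zero (hy _) (hy' _)).symm
  have hne : i - 1 ≠ i := fun h => by rw [h] at hi₁; linarith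
  have hŷi : Function.update y i (y' i) i * y' i = y' i * y' i := by simp
  have hŷ : ∀ j ≠ i, Function.update y i (y' i) j = y j := fun j hj =>
    Function.update_of_ne hj _ _
  refine ⟨i, hi, Function.update y i (y' i), fun j => ?_, hŷ, ?_,
    ⟨fun j hj => ?_, fun h => ?_⟩, ?_, ?_⟩
  · by_cases hj : j = i
    · subst hj; simpa using hy' j
    · rw [hŷ j hj]; exact hy j
  · rw [hŷi]; exact mul_self_pos.2 (hy' i)
  · have hj' : j ≠ i := by rintro rfl; simp only [mem_ofPred_eq, hŷi] at hj; nlinarith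
    simpa only [mem_ofPred_eq, hŷ j hj'] using hj
  · have := h hi; simp only [mem_ofPred_eq, hŷi] at this; nlinarith
  · refine isSignChange_iff_of_mul_pos ?_
    rw [hŷi, hŷ _ hne]
    exact mul_pos (mul_self_pos.2 (hy' i)) hi₁
  · refine isSignChange_iff_not_of_mul_neg ?_
    rw [Function.update_self, hŷ _ hne]
    exact mul_neg_of_neg_of_pos hi (mul_self_pos.2 (hy _))

theorem cyclicN_le_of_not_isSignChange {y y' : Fin n → ℝ} (hy : y ∈ cyclicLambda n)
    (hy' : y' ∈ cyclicLambda n) (hsame : ∃ j, 0 < y j * y' j)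
    (h : ∀ i, y i * y' i < 0 → ¬ IsSignChange y' i) : cyclicN n y' ≤ cyclicN n y := by
  induction hk : {i | y i * y' i < 0}.ncard using Nat.strong_induction_on generalizing y with
  | _ k ih =>
  rcases eq_empty_or_nonempty {i | y i * y' i < 0} with hD | ⟨i, hi⟩
  · exact (cyclicN_eq_of_forall_not_mul_neg hy hy' fun i h => hD.subset h).ge
  obtain ⟨i, hi, ŷ, hŷ, hoff, hpos, hsub, hŷi, hyi⟩ :=
    exists_update_of_mul_neg hy hy' hsame ⟨i, hi⟩
  calc cyclicN n y' ≤ cyclicN n ŷ :=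
        ih _ (hk ▸ ncard_lt_ncard hsub) hŷ ⟨i, hpos⟩ (fun j hj => h j (hsub.1 hj)) rfl
    _ ≤ cyclicN n y :=
        cyclicN_le_of_forall_ne hoff (mt hŷi.1 (h i hi)) (hyi.2 (mt hŷi.1 (h i hi)))

theorem cyclicN_le_of_isSignChange {y y' : Fin n → ℝ} (hy : y ∈ cyclicLambda n)
    (hy' : y' ∈ cyclicLambda n) (hsame : ∃ j, 0 < y j * y' j)
    (h : ∀ i, y i * y' i < 0 → IsSignChange y' i) : cyclicN n y ≤ cyclicN n y' := by
  induction hk : {i | y i * y' i < 0}.ncard using Nat.strong_induction_on generalizing y with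
  | _ k ih =>
  rcases eq_empty_or_nonempty {i | y i * y' i < 0} with hD | ⟨i, hi⟩
  · exact (cyclicN_eq_of_forall_not_mul_neg hy hy' fun i h => hD.subset h).le
  obtain ⟨i, hi, ŷ, hŷ, hoff, hpos, hsub, hŷi, hyi⟩ :=
    exists_update_of_mul_neg hy hy' hsame ⟨i, hi⟩
  calc cyclicN n y ≤ cyclicN n ŷ :=
        cyclicN_le_of_forall_ne (fun j hj => (hoff j hj).symm)
          (fun hs => hyi.1 hs (hŷi.2 (h i hi))) (hŷi.2 (h i hi))
    _ ≤ cyclicN n y' :=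
        ih _ (hk ▸ ncard_lt_ncard hsub) hŷ ⟨i, hpos⟩ (fun j hj => h j (hsub.1 hj)) rfl

end SignChanges

section Perturbation

variable {n : ℕ}

def AgreesInSign (z y : Fin n → ℝ) : Prop := ∀ i, z i ≠ 0 → 0 < y i * z i

theorem eventually_agreesInSign (z : Fin n → ℝ) : ∀ᶠ y in 𝓝 z, AgreesInSign z y := by
  refine eventually_all.2 fun i => eventually_imp_distrib_left.2 fun hi => ?_
  have : Tendsto (fun y : Fin n → ℝ => y i * z i) (𝓝 z) (𝓝 (z i * z i)) :=
    ((continuous_apply i).mul continuous_const).tendsto z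
  exact this.eventually (lt_mem_nhds (mul_self_pos.2 hi))

theorem AgreesInSign.mul_pos_of_ne_zero {z y y' : Fin n → ℝ} (hy : AgreesInSign z y)
    (hy' : AgreesInSign z y') {i : Fin n} (hi : z i ≠ 0) : 0 < y i * y' i :=
  pos_of_mul_pos_left (by linarith [mul_pos (hy i hi) (hy' i hi)]) (mul_self_nonneg (z i))

variable [NeZero n]

theorem cyclicN_le_of_agreesInSign_of_not_isSignChange {z y y' : Fin n → ℝ} (hz : z ≠ 0)
    (hy : y ∈ cyclicLambda n) (hy' : y' ∈ cyclicLambda n) (hyz : AgreesInSign z y)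
    (hy'z : AgreesInSign z y') (h : ∀ i, z i = 0 → ¬ IsSignChange y' i) :
    cyclicN n y' ≤ cyclicN n y := by
  obtain ⟨j, hj⟩ := Function.ne_iff.1 hz
  exact cyclicN_le_of_not_isSignChange hy hy' ⟨j, hyz.mul_pos_of_ne_zero hy'z hj⟩ fun i hi =>
    h i (by_contra fun hzi => (hyz.mul_pos_of_ne_zero hy'z hzi).not_gt hi)

theorem cyclicN_le_of_agreesInSign_of_isSignChange {z y y' : Fin n → ℝ} (hz : z ≠ 0)
    (hy : y ∈ cyclicLambda n) (hy' : y' ∈ cyclicLambda n) (hyz : AgreesInSign z y)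
    (hy'z : AgreesInSign z y') (h : ∀ i, z i = 0 → IsSignChange y' i) :
    cyclicN n y ≤ cyclicN n y' := by
  obtain ⟨j, hj⟩ := Function.ne_iff.1 hz
  exact cyclicN_le_of_isSignChange hy hy' ⟨j, hyz.mul_pos_of_ne_zero hy'z hj⟩ fun i hi =>
    h i (by_contra fun hzi => (hyz.mul_pos_of_ne_zero hy'z hzi).not_gt hi)

def cyclicNValues (n : ℕ) [NeZero n] (z : Fin n → ℝ) : Set ℕ :=
  {k | ∃ᶠ y in 𝓝[cyclicLambda n] z, cyclicN n y = k}

theorem cyclicNm_eq_sInf (z : Fin n → ℝ) : cyclicNm n z = sInf (cyclicNValues n z) := rfl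

theorem cyclicNM_eq_sSup (z : Fin n → ℝ) : cyclicNM n z = sSup (cyclicNValues n z) := rfl

theorem eventually_isLeast_cyclicNValues {α : Type*} {l : Filter α} [l.NeBot]
    {f : α → Fin n → ℝ} {z : Fin n → ℝ} (hz : z ≠ 0) (hf : Tendsto f l (𝓝 z))
    (hl : ∀ᶠ a in l, f a ∈ cyclicLambda n ∧ ∀ i, z i = 0 → ¬ IsSignChange (f a) i) :
    ∀ᶠ a in l, IsLeast (cyclicNValues n z) (cyclicN n (f a)) := by
  have hgood := hl.and (hf.eventually (eventually_agreesInSign z))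
  have hf' : Tendsto f l (𝓝[cyclicLambda n] z) :=
    tendsto_nhdsWithin_iff.2 ⟨hf, hl.mono fun _ h => h.1⟩
  filter_upwards [hgood] with a ⟨⟨ha, hnc⟩, hagr⟩
  have hconst : ∀ᶠ b in l, cyclicN n (f b) = cyclicN n (f a) := hgood.mono
    fun b ⟨⟨hb, hncb⟩, hagrb⟩ => le_antisymm
      (cyclicN_le_of_agreesInSign_of_not_isSignChange hz ha hb hagr hagrb hncb)
      (cyclicN_le_of_agreesInSign_of_not_isSignChange hz hb ha hagrb hagr hnc)
  refine ⟨hf'.frequently hconst.frequently, fun k hk => ?_⟩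
  obtain ⟨y, rfl, hy, hyz⟩ := (Frequently.and_eventually hk (eventually_mem_nhdsWithin.and
    (nhdsWithin_le_nhds (eventually_agreesInSign z)))).exists
  exact cyclicN_le_of_agreesInSign_of_not_isSignChange hz hy ha hyz hagr hnc

theorem eventually_isGreatest_cyclicNValues {α : Type*} {l : Filter α} [l.NeBot]
    {f : α → Fin n → ℝ} {z : Fin n → ℝ} (hz : z ≠ 0) (hf : Tendsto f l (𝓝 z))
    (hl : ∀ᶠ a in l, f a ∈ cyclicLambda n ∧ ∀ i, z i = 0 → IsSignChange (f a) i) :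
    ∀ᶠ a in l, IsGreatest (cyclicNValues n z) (cyclicN n (f a)) := by
  have hgood := hl.and (hf.eventually (eventually_agreesInSign z))
  have hf' : Tendsto f l (𝓝[cyclicLambda n] z) :=
    tendsto_nhdsWithin_iff.2 ⟨hf, hl.mono fun _ h => h.1⟩
  filter_upwards [hgood] with a ⟨⟨ha, hc⟩, hagr⟩
  have hconst : ∀ᶠ b in l, cyclicN n (f b) = cyclicN n (f a) := hgood.mono
    fun b ⟨⟨hb, hcb⟩, hagrb⟩ => le_antisymm
      (cyclicN_le_of_agreesInSign_of_isSignChange hz hb ha hagrb hagr hc)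
      (cyclicN_le_of_agreesInSign_of_isSignChange hz ha hb hagr hagrb hcb)
  refine ⟨hf'.frequently hconst.frequently, fun k hk => ?_⟩
  obtain ⟨y, rfl, hy, hyz⟩ := (Frequently.and_eventually hk (eventually_mem_nhdsWithin.and
    (nhdsWithin_le_nhds (eventually_agreesInSign z)))).exists
  exact cyclicN_le_of_agreesInSign_of_isSignChange hz hy ha hyz hagr hc

theorem ne_zero_of_mem_cyclicLambda {y : Fin n → ℝ} (hy : y ∈ cyclicLambda n) : y ≠ 0 :=
  fun h => hy 0 (by rw [h]; rfl)

theorem cyclicNm_eq_cyclicN {y : Fin n → ℝ} (hy : y ∈ cyclicLambda n) :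
    cyclicNm n y = cyclicN n y := by
  have := eventually_isLeast_cyclicNValues (ne_zero_of_mem_cyclicLambda hy) (f := id)
    (tendsto_id.mono_left (pure_le_nhds y)) (eventually_pure.2 ⟨hy, fun i hi => absurd hi (hy i)⟩)
  rw [cyclicNm_eq_sInf, (eventually_pure.1 this).csInf_eq, id]

theorem cyclicNm_le (z : Fin n → ℝ) : cyclicNm n z ≤ n := by
  rw [cyclicNm_eq_sInf]
  rcases (cyclicNValues n z).eq_empty_or_nonempty with h | h
  · rw [h, Nat.sInf_empty]; exact Nat.zero_le n
  · obtain ⟨y, hy⟩ := (Nat.sInf_mem h).exists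
    exact hy ▸ cyclicN_le y

theorem forall_exists_eventually_pos_mul {α : Type*} {l : Filter α} {x : α → Fin n → ℝ}
    {z : Fin n → ℝ} (hz : z ≠ 0) (hx : Tendsto x l (𝓝 z))
    (hstep : ∀ i c, z i = 0 → (∀ᶠ s in l, 0 < c * x s (i - 1)) →
      ∃ c', ∀ᶠ s in l, 0 < c' * x s i) :
    ∀ i, ∃ c, ∀ᶠ s in l, 0 < c * x s i := by
  have hbase : ∀ i, z i ≠ 0 → ∃ c, ∀ᶠ s in l, 0 < c * x s i := fun i hi =>
    ⟨z i, (hx.eventually (eventually_agreesInSign z)).mono fun s hs =>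
      mul_comm (x s i) _ ▸ hs i hi⟩
  obtain ⟨j, hj⟩ := Function.ne_iff.1 hz
  refine Fin.forall_of_imp_sub_one (hbase j hj) fun i ⟨c, hc⟩ => ?_
  by_cases hzi : z i = 0
  · exact hstep i c hzi hc
  · exact hbase i hzi

end Perturbation

theorem lowerSemicontinuous_of_nhdsGT_of_nhdsLT {α β : Type*} [TopologicalSpace α] [LinearOrder α]
    [LinearOrder β] {f : α → β} (hr : ∀ t, ∀ᶠ s in 𝓝[>] t, f s = f t)
    (hl : ∀ t, ∀ᶠ s in 𝓝[<] t, f t ≤ f s) : LowerSemicontinuous f := by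
  intro t y hy
  rw [← nhdsNE_sup_pure, ← nhdsLT_sup_nhdsGT, eventually_sup, eventually_sup]
  exact ⟨⟨(hl t).mono fun s hs => hy.trans_le hs,
    (hr t).mono fun s hs => show y < f s from hs ▸ hy⟩, hy⟩

theorem antitone_of_nhdsGT_of_nhdsLT {α β : Type*} [ConditionallyCompleteLinearOrder α]
    [TopologicalSpace α] [OrderTopology α] [DenselyOrdered α] [LinearOrder β] {f : α → β}
    (hr : ∀ t, ∀ᶠ s in 𝓝[>] t, f s = f t) (hl : ∀ t, ∀ᶠ s in 𝓝[<] t, f t ≤ f s) :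
    Antitone f := by
  intro a b hab
  have hclosed : IsClosed {t | f t ≤ f a} :=
    (lowerSemicontinuous_of_nhdsGT_of_nhdsLT hr hl).isClosed_preimage (f a)
  exact (hclosed.inter isClosed_Icc).Icc_subset_of_forall_mem_nhdsWithin le_rfl
    (fun t ht => (hr t).mono fun s hs => hs.symm ▸ ht.1) ⟨hab, le_rfl⟩

theorem Antitone.exists_forall_ge_eq {α : Type*} [Preorder α] [Nonempty α] {f : α → ℕ}
    (hf : Antitone f) : ∃ N T, ∀ t, T ≤ t → f t = N := by
  obtain ⟨T, hT⟩ := Nat.sInf_mem (range_nonempty f)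
  exact ⟨f T, T, fun t ht => le_antisymm (hf ht) (hT ▸ Nat.sInf_le (mem_range_self t))⟩

theorem Antitone.exists_forall_le_eq {α : Type*} [Preorder α] [Nonempty α] {f : α → ℕ}
    (hf : Antitone f) (hb : BddAbove (range f)) : ∃ N T, ∀ t, t ≤ T → f t = N := by
  obtain ⟨T, hT⟩ := Nat.sSup_mem (range_nonempty f) hb
  exact ⟨f T, T, fun t ht => le_antisymm (hT ▸ le_csSup hb (mem_range_self t)) (hf ht)⟩

section Scalar

variable {u p q : ℝ → ℝ}

/-- The witness is `A = -∫ p`, the integrating factor: `(exp A * u)' = exp A * q`. -/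
theorem exists_strictMonoOn_exp_mul (hp : Continuous p)
    (hu : ∀ t, HasDerivAt u (p t * u t + q t) t) :
    ∃ A : ℝ → ℝ, ∀ a b, (∀ t ∈ Ioo a b, 0 < q t) →
      StrictMonoOn (fun t => Real.exp (A t) * u t) (Icc a b) := by
  have hd : ∀ t, HasDerivAt (fun t => Real.exp (-∫ s in (0 : ℝ)..t, p s) * u t)
      (Real.exp (-∫ s in (0 : ℝ)..t, p s) * q t) t := fun t =>
    (((hp.integral_hasStrictDerivAt 0 t).hasDerivAt.neg.exp).mul (hu t)).congr_deriv
      (by rw [Pi.neg_apply]; ring)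
  refine ⟨fun t => -∫ s in (0 : ℝ)..t, p s, fun a b hq => strictMonoOn_of_deriv_pos
    (convex_Icc a b) (fun t _ => (hd t).continuousAt.continuousWithinAt) fun t ht => ?_⟩
  rw [interior_Icc] at ht
  rw [(hd t).deriv]
  exact mul_pos (Real.exp_pos _) (hq t ht)

theorem eventually_nhdsGT_pos_of_hasDerivAt {t₀ : ℝ} (hp : Continuous p)
    (hu : ∀ t, HasDerivAt u (p t * u t + q t) t) (h₀ : u t₀ = 0)
    (hq : ∀ᶠ t in 𝓝[>] t₀, 0 < q t) : ∀ᶠ t in 𝓝[>] t₀, 0 < u t := by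
  obtain ⟨A, hA⟩ := exists_strictMonoOn_exp_mul hp hu
  obtain ⟨b, hb, hqb⟩ := mem_nhdsGT_iff_exists_Ioo_subset.1 hq
  filter_upwards [Ioo_mem_nhdsGT hb] with t ht
  have := hA t₀ b hqb ⟨le_rfl, le_of_lt hb⟩ ⟨ht.1.le, ht.2.le⟩ ht.1
  simp only [h₀, mul_zero] at this
  exact pos_of_mul_pos_right this (Real.exp_pos _).le

theorem eventually_nhdsLT_neg_of_hasDerivAt {t₀ : ℝ} (hp : Continuous p)
    (hu : ∀ t, HasDerivAt u (p t * u t + q t) t) (h₀ : u t₀ = 0)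
    (hq : ∀ᶠ t in 𝓝[<] t₀, 0 < q t) : ∀ᶠ t in 𝓝[<] t₀, u t < 0 := by
  obtain ⟨A, hA⟩ := exists_strictMonoOn_exp_mul hp hu
  obtain ⟨a, ha, hqa⟩ := mem_nhdsLT_iff_exists_Ioo_subset.1 hq
  filter_upwards [Ioo_mem_nhdsLT ha] with t ht
  have := hA a t₀ hqa ⟨ht.1.le, ht.2.le⟩ ⟨le_of_lt ha, le_rfl⟩ ht.2
  simp only [h₀, mul_zero] at this
  exact neg_of_mul_neg_right this (Real.exp_pos _).le

end Scalar
namespace LinCNF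

variable {n : ℕ} [NeZero n] (S : LinCNF n)

def field (t : ℝ) (y : Fin n → ℝ) : Fin n → ℝ :=
  fun i => S.diag t i * y i + S.sub t i * y (i - 1)

theorem cyclicDelta_mul_sub_pos (t : ℝ) (i : Fin n) : 0 < cyclicDelta n i * S.sub t i := by
  unfold cyclicDelta
  split_ifs with h
  · subst h; linarith [S.sub_neg t]
  · linarith [S.sub_pos t i h]

theorem lipschitzWith_field (t : ℝ) : LipschitzWith (‖S.diag t‖₊ + ‖S.sub t‖₊) (S.field t) := by
  refine LipschitzWith.of_dist_le_mul fun y w => (dist_pi_le_iff (by positivity)).2 fun i => ?_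
  have hd := norm_le_pi_norm (S.diag t) i
  have hs := norm_le_pi_norm (S.sub t) i
  have hy := dist_le_pi_dist y w i
  have hy' := dist_le_pi_dist y w (i - 1)
  rw [Real.norm_eq_abs] at hd hs
  rw [Real.dist_eq] at hy hy' ⊢
  calc |S.field t y i - S.field t w i|
      = |S.diag t i * (y i - w i) + S.sub t i * (y (i - 1) - w (i - 1))| := by
        simp only [field]; congr 1; ring
    _ ≤ |S.diag t i| * |y i - w i| + |S.sub t i| * |y (i - 1) - w (i - 1)| := by
        rw [← abs_mul, ← abs_mul]; exact abs_add_le _ _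
    _ ≤ ‖S.diag t‖ * dist y w + ‖S.sub t‖ * dist y w := by gcongr
    _ = _ := by push_cast; ring

variable {S} {x : ℝ → Fin n → ℝ}

theorem IsSolution.continuous (hsol : S.IsSolution x) : Continuous x :=
  continuous_pi fun i => continuous_iff_continuousAt.2 fun t => (hsol t i).continuousAt

theorem IsSolution.hasDerivAt (hsol : S.IsSolution x) (t : ℝ) :
    HasDerivAt x (S.field t (x t)) t :=
  hasDerivAt_pi.2 (hsol t)

theorem IsSolution.eventuallyEq_zero (hsol : S.IsSolution x) {t₀ : ℝ} (h : x t₀ = 0) :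
    x =ᶠ[𝓝 t₀] 0 := by
  have hK : Continuous fun t => ‖S.diag t‖₊ + ‖S.sub t‖₊ :=
    (continuous_pi S.cont_diag).nnnorm.add (continuous_pi S.cont_sub).nnnorm
  have hlip : ∀ᶠ t in 𝓝 t₀, LipschitzOnWith (‖S.diag t₀‖₊ + ‖S.sub t₀‖₊ + 1) (S.field t) univ :=
    (hK.tendsto t₀ |>.eventually (gt_mem_nhds (lt_add_one _))).mono fun t ht =>
      ((S.lipschitzWith_field t).weaken ht.le).lipschitzOnWith
  refine ODE_solution_unique_of_eventually hlip
    (Eventually.of_forall fun t => ⟨hsol.hasDerivAt t, mem_univ _⟩)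
    (Eventually.of_forall fun t => ⟨?_, mem_univ _⟩) h
  have : S.field t 0 = 0 := by ext i; simp [field]
  rw [Pi.zero_apply, this]
  exact hasDerivAt_const t _

theorem IsSolution.ne_zero (hsol : S.IsSolution x) (hx : ¬ ∀ t, x t = 0) (t : ℝ) : x t ≠ 0 := by
  have hclopen : IsClopen {t | x t = 0} :=
    ⟨isClosed_eq hsol.continuous continuous_const,
      isOpen_iff_mem_nhds.2 fun t ht => hsol.eventuallyEq_zero ht⟩
  rcases isClopen_iff.1 hclopen with h | h
  · exact fun ht => (h.subset ht : t ∈ (∅ : Set ℝ))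
  · exact absurd (fun t => (h.symm.subset (mem_univ t) : x t = 0)) hx

theorem IsSolution.hasDerivAt_mul_cyclicDelta (hsol : S.IsSolution x) (c t : ℝ) (i : Fin n) :
    HasDerivAt (fun s => c * cyclicDelta n i * x s i)
      (S.diag t i * (c * cyclicDelta n i * x t i) +
        cyclicDelta n i * S.sub t i * (c * x t (i - 1))) t :=
  ((hsol t i).const_mul (c * cyclicDelta n i)).congr_deriv (by ring)

theorem IsSolution.eventually_nhdsGT_pos (hsol : S.IsSolution x) {t₀ c : ℝ} {i : Fin n}
    (hi : x t₀ i = 0) (h : ∀ᶠ s in 𝓝[>] t₀, 0 < c * x s (i - 1)) :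
    ∀ᶠ s in 𝓝[>] t₀, 0 < c * cyclicDelta n i * x s i :=
  eventually_nhdsGT_pos_of_hasDerivAt (S.cont_diag i) (hsol.hasDerivAt_mul_cyclicDelta c · i)
    (by simp [hi]) (h.mono fun s hs => mul_pos (S.cyclicDelta_mul_sub_pos s i) hs)

theorem IsSolution.eventually_nhdsLT_neg (hsol : S.IsSolution x) {t₀ c : ℝ} {i : Fin n}
    (hi : x t₀ i = 0) (h : ∀ᶠ s in 𝓝[<] t₀, 0 < c * x s (i - 1)) :
    ∀ᶠ s in 𝓝[<] t₀, c * cyclicDelta n i * x s i < 0 :=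
  eventually_nhdsLT_neg_of_hasDerivAt (S.cont_diag i) (hsol.hasDerivAt_mul_cyclicDelta c · i)
    (by simp [hi]) (h.mono fun s hs => mul_pos (S.cyclicDelta_mul_sub_pos s i) hs)

theorem IsSolution.eventually_nhdsGT (hsol : S.IsSolution x) {t₀ : ℝ} (hz : x t₀ ≠ 0) :
    ∀ᶠ s in 𝓝[>] t₀,
      x s ∈ cyclicLambda n ∧ ∀ i, x t₀ i = 0 → ¬ IsSignChange (x s) i := by
  choose c hc using forall_exists_eventually_pos_mul hz
    ((hsol.continuous.tendsto t₀).mono_left nhdsWithin_le_nhds)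
    fun i c hi h => ⟨_, hsol.eventually_nhdsGT_pos hi h⟩
  refine ((eventually_all.2 hc).and (eventually_all.2 fun i => eventually_imp_distrib_left.2
    fun hi => ?_)).mono fun s hs => ⟨fun i => right_ne_zero_of_mul (hs.1 i).ne', hs.2⟩
  filter_upwards [hc (i - 1), hsol.eventually_nhdsGT_pos hi (hc (i - 1))] with s h₁ h₂
  exact not_isSignChange_of_pos h₁ h₂

theorem IsSolution.eventually_nhdsLT (hsol : S.IsSolution x) {t₀ : ℝ} (hz : x t₀ ≠ 0) :
    ∀ᶠ s in 𝓝[<] t₀,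
      x s ∈ cyclicLambda n ∧ ∀ i, x t₀ i = 0 → IsSignChange (x s) i := by
  choose c hc using forall_exists_eventually_pos_mul hz
    ((hsol.continuous.tendsto t₀).mono_left nhdsWithin_le_nhds)
    fun i c hi h => ⟨-(c * cyclicDelta n i),
      (hsol.eventually_nhdsLT_neg hi h).mono fun s hs => by rw [neg_mul]; exact neg_pos.2 hs⟩
  refine ((eventually_all.2 hc).and (eventually_all.2 fun i => eventually_imp_distrib_left.2
    fun hi => ?_)).mono fun s hs => ⟨fun i => right_ne_zero_of_mul (hs.1 i).ne', hs.2⟩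
  filter_upwards [hc (i - 1), hsol.eventually_nhdsLT_neg hi (hc (i - 1))] with s h₁ h₂
  exact isSignChange_of_neg h₁ h₂

end LinCNF

namespace LinCNF.IsSolution

variable {n : ℕ} [NeZero n] {S : LinCNF n} {x : ℝ → Fin n → ℝ}

theorem eventually_isLeast (hsol : S.IsSolution x) {t : ℝ} (hz : x t ≠ 0) :
    ∀ᶠ s in 𝓝[>] t, x s ∈ cyclicLambda n ∧ IsLeast (cyclicNValues n (x t)) (cyclicN n (x s)) :=
  (hsol.eventually_nhdsGT hz).and (eventually_isLeast_cyclicNValues hz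
    ((hsol.continuous.tendsto t).mono_left nhdsWithin_le_nhds) (hsol.eventually_nhdsGT hz))
  |>.mono fun _ h => ⟨h.1.1, h.2⟩

theorem eventually_isGreatest (hsol : S.IsSolution x) {t : ℝ} (hz : x t ≠ 0) :
    ∀ᶠ s in 𝓝[<] t, x s ∈ cyclicLambda n ∧ IsGreatest (cyclicNValues n (x t)) (cyclicN n (x s)) :=
  (hsol.eventually_nhdsLT hz).and (eventually_isGreatest_cyclicNValues hz
    ((hsol.continuous.tendsto t).mono_left nhdsWithin_le_nhds) (hsol.eventually_nhdsLT hz))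
  |>.mono fun _ h => ⟨h.1.1, h.2⟩

theorem eventually_cyclicNm_nhdsGT (hsol : S.IsSolution x) {t : ℝ} (hz : x t ≠ 0) :
    ∀ᶠ s in 𝓝[>] t, cyclicNm n (x s) = cyclicNm n (x t) :=
  (hsol.eventually_isLeast hz).mono fun _ h => by
    rw [cyclicNm_eq_cyclicN h.1, cyclicNm_eq_sInf, h.2.csInf_eq]

theorem eventually_cyclicNm_nhdsLT (hsol : S.IsSolution x) {t : ℝ} (hz : x t ≠ 0) :
    ∀ᶠ s in 𝓝[<] t, cyclicNm n (x s) = cyclicNM n (x t) :=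
  (hsol.eventually_isGreatest hz).mono fun _ h => by
    rw [cyclicNm_eq_cyclicN h.1, cyclicNM_eq_sSup, h.2.csSup_eq]

theorem cyclicNm_le_cyclicNM (hsol : S.IsSolution x) {t : ℝ} (hz : x t ≠ 0) :
    cyclicNm n (x t) ≤ cyclicNM n (x t) := by
  obtain ⟨s₁, -, hs₁⟩ := (hsol.eventually_isLeast hz).exists
  obtain ⟨s₂, -, hs₂⟩ := (hsol.eventually_isGreatest hz).exists
  rw [cyclicNm_eq_sInf, cyclicNM_eq_sSup, hs₁.csInf_eq, hs₂.csSup_eq]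
  exact hs₁.2 hs₂.1

theorem antitone_cyclicNm (hsol : S.IsSolution x) (hz : ∀ t, x t ≠ 0) :
    Antitone fun t => cyclicNm n (x t) :=
  antitone_of_nhdsGT_of_nhdsLT (fun t => hsol.eventually_cyclicNm_nhdsGT (hz t)) fun t =>
    (hsol.eventually_cyclicNm_nhdsLT (hz t)).mono fun _ hs =>
      hs.symm ▸ hsol.cyclicNm_le_cyclicNM (hz t)

theorem mem_cyclicGood_of_isOpen (hsol : S.IsSolution x) (hz : ∀ t, x t ≠ 0) {U : Set ℝ}
    (hU : IsOpen U) {N : ℕ} (hN : ∀ t ∈ U, cyclicNm n (x t) = N) :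
    ∀ t ∈ U, x t ∈ cyclicGood n ∧ cyclicNm n (x t) = N := by
  intro t ht
  obtain ⟨s, hs, hsU⟩ := ((hsol.eventually_cyclicNm_nhdsLT (hz t)).and
    (nhdsWithin_le_nhds (hU.mem_nhds ht))).exists
  exact ⟨(hN t ht).trans ((hN s hsU).symm.trans hs), hN t ht⟩

end LinCNF.IsSolution

theorem stmt2_general (n : ℕ) [NeZero n] (S : LinCNF n) (x : ℝ → Fin n → ℝ)
    (hsol : S.IsSolution x) (hnontriv : ¬ ∀ t, x t = 0) :
    ∃ t₀ > (0 : ℝ), ∃ Nplus Nminus : ℕ,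
      (∀ t : ℝ, t₀ ≤ t → x t ∈ cyclicGood n ∧ cyclicNm n (x t) = Nplus) ∧
      (∀ t : ℝ, t ≤ -t₀ → x t ∈ cyclicGood n ∧ cyclicNm n (x t) = Nminus) := by
  have hz := hsol.ne_zero hnontriv
  have hanti := hsol.antitone_cyclicNm hz
  obtain ⟨Nplus, T₁, hplus⟩ := hanti.exists_forall_ge_eq
  obtain ⟨Nminus, T₂, hminus⟩ :=
    hanti.exists_forall_le_eq ⟨n, by rintro _ ⟨t, rfl⟩; exact cyclicNm_le _⟩
  have hgood₁ := hsol.mem_cyclicGood_of_isOpen hz isOpen_Ioi fun t ht => hplus t (le_of_lt ht)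
  have hgood₂ := hsol.mem_cyclicGood_of_isOpen hz isOpen_Iio fun t ht => hminus t (le_of_lt ht)
  refine ⟨|T₁| + |T₂| + 1, by positivity, Nplus, Nminus, fun t ht => hgood₁ t ?_,
    fun t ht => hgood₂ t ?_⟩
  · show T₁ < t
    linarith [le_abs_self T₁, abs_nonneg T₂]
  · show t < T₂
    linarith [neg_abs_le T₂, abs_nonneg T₁]

/-- Eventual constancy of `N` along a nontrivial solution, both
as `t → +∞` and as `t → −∞`. -/
theorem stmt2 (n : ℕ) [NeZero n] (hn : 2 ≤ n) (S : LinCNF n) (x : ℝ → Fin n → ℝ)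
    (hsol : S.IsSolution x) (hnontriv : ¬ ∀ t, x t = 0) :
    ∃ t₀ > (0 : ℝ), ∃ Nplus Nminus : ℕ,
      (∀ t : ℝ, t₀ ≤ t → x t ∈ cyclicGood n ∧ cyclicNm n (x t) = Nplus) ∧
      (∀ t : ℝ, t ≤ -t₀ → x t ∈ cyclicGood n ∧ cyclicNm n (x t) = Nminus) :=
  stmt2_general n S x hsol hnontriv
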